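/- A forgetful single-history channel with delay function δ and initial value x is a constant-delay channel (i.e., there exists d > 0 such that for every signal s the channel output c(s) satisfies c(s)(t) = x for t < d and c(s)(t) = s(t − d) for t ≥ d) if and only if δ is constant on the open interval (−δ∞, ∞). -/

import Mathlib

open scoped Classical

/-- A (binary, continuous-time) signal: it attains its new value at each transition time
(right-local constancy) and changes value only finitely often in every bounded
interval. -/
def IsSignal (s : ℝ → Bool) : Prop :=
  (∀ t : ℝ, ∃ ε > 0, ∀ u : ℝ, t ≤ u → u < t + ε → s u = s t) ∧
  (∀ a b : ℝ, {t : ℝ | a ≤ t ∧ t ≤ b ∧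
      ∀ ε > 0, ∃ u : ℝ, t - ε < u ∧ u < t ∧ s u ≠ s t}.Finite)

/-- `t` is a transition time of `s`: arbitrarily shortly before `t` the value differs. -/
def Transition (s : ℝ → Bool) (t : ℝ) : Prop :=
  ∀ ε > 0, ∃ u : ℝ, t - ε < u ∧ u < t ∧ s u ≠ s t

/-- Extension of `s` to negative times by the channel's initial value `x`; its
transitions on `[0,∞)` form exactly the channel's input event list (with the extra
event at time `0` prepended when the initial value of `s` differs from `x`). -/
noncomputable def extendInit (x : Bool) (s : ℝ → Bool) : ℝ → Bool := fun t => if t < 0 then x else s t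

/-- `ev` enumerates, in strictly increasing order and without repetitions or omissions,
the input event list of the signal `s` for a channel with initial value `x`
(`none` marks the end of a finite event list). -/
def EnumeratesEvents (x : Bool) (s : ℝ → Bool) (ev : ℕ → Option (ℝ × Bool)) : Prop :=
  (∀ n, ev n = none → ev (n + 1) = none) ∧
  (∀ n e e', ev n = some e → ev (n + 1) = some e' → e.1 < e'.1) ∧
  (∀ n t b, ev n = some (t, b) → Transition (extendInit x s) t ∧ extendInit x s t = b) ∧
  (∀ t : ℝ, Transition (extendInit x s) t → ∃ n, ev n = some (t, extendInit x s t))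

/-- The value of the last event of an output list (stored in reverse order, the most
recent event first); the implicit initial event is `(−∞, x)`. -/
def lastVal (x : Bool) : List (ℝ × Bool) → Bool
  | [] => x
  | e :: _ => e.2

/-- One iteration of the forgetful single-history channel algorithm. -/
noncomputable def fstep (δ : ℝ → ℝ) (dinfty : ℝ) (x : Bool)
    (S : List (ℝ × Bool)) (e : ℝ × Bool) : List (ℝ × Bool) :=
  if e.2 = lastVal x S then S
  else
    match S with
    | [] => [(e.1 + dinfty, e.2)]
    | (t', b) :: rest =>
        if t' < e.1 + δ (e.1 - t') then (e.1 + δ (e.1 - t'), e.2) :: (t', b) :: rest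
        else rest

/-- The output list after `n` iterations of the forgetful algorithm on a finite or
infinite input event list. -/
noncomputable def fstatesO (δ : ℝ → ℝ) (dinfty : ℝ) (x : Bool)
    (ev : ℕ → Option (ℝ × Bool)) : ℕ → List (ℝ × Bool)
  | 0 => []
  | n + 1 =>
      match ev n with
      | none => fstatesO δ dinfty x ev n
      | some e => fstep δ dinfty x (fstatesO δ dinfty x ev n) e

/-- The events of the limiting output list: those that eventually stay in `S_n`. -/
noncomputable def limitEvents (δ : ℝ → ℝ) (dinfty : ℝ) (x : Bool)
    (ev : ℕ → Option (ℝ × Bool)) : Set (ℝ × Bool) :=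
  {e | ∃ N, ∀ n, N ≤ n → e ∈ fstatesO δ dinfty x ev n}

/-- `out` is the signal described by the event set `E` together with the initial event
`(−∞, x)`: at every time its value is the value of the latest event not after it. -/
def SignalOfEvents (x : Bool) (E : Set (ℝ × Bool)) (out : ℝ → Bool) : Prop :=
  ∀ t : ℝ,
    (∃ e ∈ E, e.1 ≤ t ∧ out t = e.2 ∧ ∀ e' ∈ E, e'.1 ≤ t → e'.1 ≤ e.1) ∨
    ((∀ e ∈ E, t < e.1) ∧ out t = x)

/-- The input/output relation of the forgetful single-history channel with delay
function `δ`, limit delay `dinfty = δ∞` and initial value `x`. -/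
def ForgetfulChannel (δ : ℝ → ℝ) (dinfty : ℝ) (x : Bool) (s out : ℝ → Bool) : Prop :=
  ∃ ev : ℕ → Option (ℝ × Bool), EnumeratesEvents x s ev ∧
    SignalOfEvents x (limitEvents δ dinfty x ev) out

/-- The constant-delay channel with delay `d` and initial value `x`. -/
noncomputable def delayChannel (d : ℝ) (x : Bool) (s : ℝ → Bool) : ℝ → Bool :=
  fun t => if t < d then x else s (t - d)


lemma fstep_nil (δ : ℝ → ℝ) (dinfty : ℝ) (x : Bool) (e : ℝ × Bool) :
    fstep δ dinfty x [] e = if e.2 = x then [] else [(e.1 + dinfty, e.2)] := rfl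

lemma fstep_cons (δ : ℝ → ℝ) (dinfty : ℝ) (x : Bool) (t' : ℝ) (b : Bool)
    (rest : List (ℝ × Bool)) (e : ℝ × Bool) :
    fstep δ dinfty x ((t', b) :: rest) e =
      if e.2 = b then (t', b) :: rest
      else if t' < e.1 + δ (e.1 - t') then (e.1 + δ (e.1 - t'), e.2) :: (t', b) :: rest
      else rest := rfl

lemma fstatesO_zero (δ : ℝ → ℝ) (dinfty : ℝ) (x : Bool) (ev : ℕ → Option (ℝ × Bool)) :
    fstatesO δ dinfty x ev 0 = [] := rfl

lemma fstatesO_succ_none (δ : ℝ → ℝ) (dinfty : ℝ) (x : Bool) (ev : ℕ → Option (ℝ × Bool))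
    (n : ℕ) (h : ev n = none) :
    fstatesO δ dinfty x ev (n + 1) = fstatesO δ dinfty x ev n := by
  simp [fstatesO, h]

lemma fstatesO_succ_some (δ : ℝ → ℝ) (dinfty : ℝ) (x : Bool) (ev : ℕ → Option (ℝ × Bool))
    (n : ℕ) (e : ℝ × Bool) (h : ev n = some e) :
    fstatesO δ dinfty x ev (n + 1) = fstep δ dinfty x (fstatesO δ dinfty x ev n) e := by
  simp [fstatesO, h]

lemma extendInit_rc (x : Bool) {s : ℝ → Bool}
    (hs : ∀ t : ℝ, ∃ ε > 0, ∀ u : ℝ, t ≤ u → u < t + ε → s u = s t) :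
    ∀ t : ℝ, ∃ ε > 0, ∀ u : ℝ, t ≤ u → u < t + ε → extendInit x s u = extendInit x s t := by
  intro t
  rcases lt_or_ge t 0 with ht | ht
  · exact ⟨-t, by linarith, fun u hu1 hu2 => by
      simp only [extendInit, if_pos (show u < 0 by linarith), if_pos ht]⟩
  · obtain ⟨ε, hε, h⟩ := hs t
    exact ⟨ε, hε, fun u hu1 hu2 => by
      simp only [extendInit, if_neg (not_lt.2 (le_trans ht hu1)), if_neg (not_lt.2 ht)]
      exact h u hu1 hu2⟩

lemma const_of_noTransition (g : ℝ → Bool)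
    (hrc : ∀ t : ℝ, ∃ ε > 0, ∀ u : ℝ, t ≤ u → u < t + ε → g u = g t)
    (a T : ℝ) (haT : a ≤ T)
    (hnt : ∀ τ : ℝ, a < τ → τ ≤ T → ¬ Transition g τ) : g T = g a := by
  by_contra hne
  have haT' : a < T := lt_of_le_of_ne haT (by rintro rfl; exact hne rfl)
  set A : Set ℝ := {u : ℝ | (a < u ∧ u ≤ T) ∧ g u ≠ g a} with hA
  have hTA : T ∈ A := ⟨⟨haT', le_refl _⟩, hne⟩
  have hbdd : BddBelow A := ⟨a, fun u hu => le_of_lt hu.1.1⟩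
  have hAne : A.Nonempty := ⟨T, hTA⟩
  set c := sInf A with hc
  have hcT : c ≤ T := csInf_le hbdd hTA
  have hac : a < c := by
    obtain ⟨ε, hε, h⟩ := hrc a
    have hεc : a + ε ≤ c := le_csInf hAne (fun u hu => by
      by_contra hlt
      exact hu.2 (h u (le_of_lt hu.1.1) (lt_of_not_ge hlt)))
    linarith
  have hgc : g c ≠ g a := by
    intro hEq
    obtain ⟨ε, hε, h⟩ := hrc c
    obtain ⟨u, huA, hu⟩ := exists_lt_of_csInf_lt hAne (show sInf A < c + ε by linarith)
    have hcu : c ≤ u := csInf_le hbdd huA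
    exact huA.2 (by rw [h u hcu hu, hEq])
  apply hnt c hac hcT
  intro ε hε
  have h1 : max a (c - ε) < c := max_lt hac (by linarith)
  set u := (max a (c - ε) + c) / 2 with hu
  have hu1 : u < c := by rw [hu]; linarith
  have hu2 : a < u := by
    have h2 := le_max_left a (c - ε); rw [hu]; linarith
  have hu3 : c - ε < u := by
    have h2 := le_max_right a (c - ε); rw [hu]; linarith
  have huT : u ≤ T := le_trans (le_of_lt hu1) hcT
  have hunotA : u ∉ A := fun hmem => absurd (csInf_le hbdd hmem) (not_le.2 hu1)
  have hgu : g u = g a := by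
    by_contra h'
    exact hunotA ⟨⟨hu2, huT⟩, h'⟩
  exact ⟨u, hu3, hu1, by rw [hgu]; exact fun h' => hgc h'.symm⟩

lemma transition_nonneg (x : Bool) (s : ℝ → Bool) (τ : ℝ)
    (h : Transition (extendInit x s) τ) : 0 ≤ τ := by
  by_contra hτ
  push_neg at hτ
  obtain ⟨u, hu1, hu2, hu3⟩ := h (-τ) (by linarith)
  apply hu3
  simp only [extendInit, if_pos (lt_trans hu2 hτ), if_pos hτ]

lemma backward_lemma (δ : ℝ → ℝ) (dinfty : ℝ) (x : Bool)
    (hconst : ∀ u : ℝ, -dinfty < u → δ u = dinfty)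
    (s out : ℝ → Bool) (hs : IsSignal s)
    (hch : ForgetfulChannel δ dinfty x s out) :
    out = delayChannel dinfty x s := by
  obtain ⟨ev, ⟨hst, hinc, hcor, hcomp⟩, hsig⟩ := hch
  have hrc := extendInit_rc x hs.1
  set g := extendInit x s with hgdef
  have hsome : ∀ n : ℕ, ∀ e : ℝ × Bool, ev (n+1) = some e → ∃ e', ev n = some e' := by
    intro n e he
    cases h : ev n with
    | none => rw [hst n h] at he; exact absurd he (by simp)
    | some e' => exact ⟨e', rfl⟩
  have hmonok : ∀ m k : ℕ, ∀ e e' : ℝ × Bool, ev m = some e →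
      ev (m + k + 1) = some e' → e.1 < e'.1 := by
    intro m k
    induction k with
    | zero => exact fun e e' h1 h2 => hinc m e e' h1 h2
    | succ k ih =>
        intro e e' h1 h2
        obtain ⟨e'', h3⟩ := hsome (m + k + 1) e' h2
        exact lt_trans (ih e e'' h1 h3) (hinc (m + k + 1) e'' e' h3 h2)
  have hmono' : ∀ m n : ℕ, m < n → ∀ e e' : ℝ × Bool, ev m = some e →
      ev n = some e' → e.1 < e'.1 := by
    intro m n hmn e e' h1 h2
    obtain ⟨k, hk⟩ := Nat.exists_eq_add_of_lt hmn
    subst hk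
    exact hmonok m k e e' h1 h2
  have hbetween : ∀ n : ℕ, ∀ e e' : ℝ × Bool, ev n = some e → ev (n+1) = some e' →
      ∀ τ : ℝ, e.1 < τ → τ < e'.1 → ¬ Transition g τ := by
    intro n e e' h1 h2 τ hτ1 hτ2 htr
    obtain ⟨k, hk⟩ := hcomp τ htr
    rcases lt_trichotomy k n with h | h | h
    · have h4 := hmono' k n h _ _ hk h1
      simp only at h4; linarith
    · subst h
      rw [h1] at hk
      have h4 : e = (τ, g τ) := Option.some.inj hk
      rw [h4] at hτ1; simp only at hτ1; linarith
    · rcases eq_or_lt_of_le (Nat.succ_le_of_lt h) with h' | h'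
      · rw [← h'] at hk
        rw [h2] at hk
        have h4 : e' = (τ, g τ) := Option.some.inj hk
        rw [h4] at hτ2; simp only at hτ2; linarith
      · have h4 := hmono' (n+1) k h' _ _ h2 hk
        simp only at h4; linarith
  have hnot_before : ∀ τ : ℝ, Transition g τ → ∀ e : ℝ × Bool, ev 0 = some e → e.1 ≤ τ := by
    intro τ htr e h0
    obtain ⟨k, hk⟩ := hcomp τ htr
    cases k with
    | zero =>
        rw [h0] at hk
        have h4 : e = (τ, g τ) := Option.some.inj hk
        rw [h4]
    | succ k =>
        have h4 := hmono' 0 (k+1) (Nat.succ_pos k) _ _ h0 hk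
        simp only at h4; linarith
  have hfirstval : ∀ e : ℝ × Bool, ev 0 = some e → e.2 ≠ x := by
    intro e h0
    obtain ⟨htr, hval⟩ := hcor 0 e.1 e.2 (by rw [Prod.mk.eta]; exact h0)
    have ht0 : (0:ℝ) ≤ e.1 := transition_nonneg x s e.1 htr
    obtain ⟨u, hu1, hu2, hu3⟩ := htr (e.1 + 1) (by linarith)
    have hu1' : (-1:ℝ) < u := by linarith
    have hnt : ∀ τ : ℝ, (-1:ℝ) < τ → τ ≤ u → ¬ Transition g τ := by
      intro τ hτ1 hτ2 htr'
      have h5 := hnot_before τ htr' e h0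
      linarith
    have hgu1 : g u = g (-1) :=
      const_of_noTransition g hrc (-1) u (le_of_lt hu1') hnt
    have hgu : g u = x := by
      rw [hgu1, hgdef]; simp only [extendInit]
      rw [if_pos (show (-1:ℝ) < 0 by norm_num)]
    intro hbx
    apply hu3
    rw [hgu, hval, hbx]
  have halt : ∀ n : ℕ, ∀ e e' : ℝ × Bool, ev n = some e → ev (n+1) = some e' →
      e'.2 ≠ e.2 := by
    intro n e e' h1 h2
    obtain ⟨htr', hval'⟩ := hcor (n+1) e'.1 e'.2 (by rw [Prod.mk.eta]; exact h2)
    obtain ⟨htr, hval⟩ := hcor n e.1 e.2 (by rw [Prod.mk.eta]; exact h1)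
    have hlt := hinc n e e' h1 h2
    obtain ⟨u, hu1, hu2, hu3⟩ := htr' (e'.1 - e.1) (by linarith)
    have hu1' : e.1 < u := by linarith
    have hnt : ∀ τ : ℝ, e.1 < τ → τ ≤ u → ¬ Transition g τ := fun τ hτ1 hτ2 htr'' =>
      hbetween n e e' h1 h2 τ hτ1 (lt_of_le_of_lt hτ2 hu2) htr''
    have hgu : g u = g e.1 :=
      const_of_noTransition g hrc e.1 u (le_of_lt hu1') hnt
    intro heq
    apply hu3
    rw [hgu, hval, hval', heq]
  have hINV : ∀ n : ℕ, ∀ e : ℝ × Bool, ev n = some e →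
      fstatesO δ dinfty x ev (n+1) = (e.1 + dinfty, e.2) :: fstatesO δ dinfty x ev n := by
    intro n
    induction n with
    | zero =>
        intro e he
        rw [fstatesO_succ_some δ dinfty x ev 0 e he, fstatesO_zero, fstep_nil,
          if_neg (hfirstval e he)]
    | succ n ih =>
        intro e he
        obtain ⟨e', he'⟩ := hsome n e he
        have hIH := ih e' he'
        rw [fstatesO_succ_some δ dinfty x ev (n+1) e he, hIH, fstep_cons,
          if_neg (halt n e' e he' he)]
        have harg : δ (e.1 - (e'.1 + dinfty)) = dinfty := by
          apply hconst
          have h4 := hinc n e' e he' he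
          linarith
        rw [harg, if_pos (by linarith [hinc n e' e he' he])]
  have hsub : ∀ n : ℕ, ∀ f : ℝ × Bool,
      f ∈ fstatesO δ dinfty x ev n → f ∈ fstatesO δ dinfty x ev (n+1) := by
    intro n f hf
    cases h : ev n with
    | none => rwa [fstatesO_succ_none δ dinfty x ev n h]
    | some e => rw [hINV n e h]; exact List.mem_cons_of_mem _ hf
  have hsub' : ∀ m n : ℕ, m ≤ n → ∀ f : ℝ × Bool,
      f ∈ fstatesO δ dinfty x ev m → f ∈ fstatesO δ dinfty x ev n := by
    intro m n hmn f hf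
    induction hmn with
    | refl => exact hf
    | step _ ih => exact hsub _ _ ih
  have hE2 : ∀ n : ℕ, ∀ e : ℝ × Bool, ev n = some e →
      (e.1 + dinfty, e.2) ∈ limitEvents δ dinfty x ev := by
    intro n e he
    refine ⟨n+1, fun k hk => hsub' (n+1) k hk _ ?_⟩
    rw [hINV n e he]
    exact List.mem_cons_self
  have hE1 : ∀ n : ℕ, ∀ f : ℝ × Bool, f ∈ fstatesO δ dinfty x ev n →
      ∃ m : ℕ, ∃ e : ℝ × Bool, ev m = some e ∧ f = (e.1 + dinfty, e.2) := by
    intro n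
    induction n with
    | zero => intro f hf; rw [fstatesO_zero] at hf; simp at hf
    | succ n ih =>
        intro f hf
        cases h : ev n with
        | none => rw [fstatesO_succ_none δ dinfty x ev n h] at hf; exact ih f hf
        | some e =>
            rw [hINV n e h] at hf
            rcases List.mem_cons.1 hf with h1 | h1
            · exact ⟨n, e, h, h1⟩
            · exact ih f h1
  funext t
  rcases hsig t with ⟨e, heE, hle, hout, hmax⟩ | ⟨hall, hout⟩
  · obtain ⟨N, hN⟩ := heE
    obtain ⟨m, em, hm, hfe⟩ := hE1 N e (hN N (le_refl N))
    obtain ⟨htr, hval⟩ := hcor m em.1 em.2 (by rw [Prod.mk.eta]; exact hm)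
    have hτ0 : (0:ℝ) ≤ em.1 := transition_nonneg x s em.1 htr
    have he1 : e.1 = em.1 + dinfty := by rw [hfe]
    have he2 : e.2 = em.2 := by rw [hfe]
    have ht : em.1 + dinfty ≤ t := he1 ▸ hle
    have hnlt : ¬ t < dinfty := not_lt.2 (by linarith)
    show out t = delayChannel dinfty x s t
    simp only [delayChannel]
    rw [if_neg hnlt, hout, he2]
    have hst' : g (t - dinfty) = s (t - dinfty) := by
      rw [hgdef]; simp only [extendInit]
      rw [if_neg (not_lt.2 (show (0:ℝ) ≤ t - dinfty by linarith))]
    have hnt : ∀ σ : ℝ, em.1 < σ → σ ≤ t - dinfty → ¬ Transition g σ := by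
      intro σ hσ1 hσ2 htr'
      obtain ⟨k, hk⟩ := hcomp σ htr'
      have hmem := hE2 k (σ, g σ) hk
      have h6 : σ + dinfty ≤ e.1 := hmax _ hmem (show σ + dinfty ≤ t by linarith)
      rw [he1] at h6
      linarith
    have hgt : g (t - dinfty) = g em.1 :=
      const_of_noTransition g hrc em.1 (t - dinfty) (by linarith) hnt
    rw [← hval, ← hgt, hst']
  · show out t = delayChannel dinfty x s t
    rw [hout]
    simp only [delayChannel]
    rcases lt_or_ge t dinfty with h | h
    · rw [if_pos h]
    · rw [if_neg (not_lt.2 h)]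
      have h0 : (0:ℝ) ≤ t - dinfty := by linarith
      have hst' : g (t - dinfty) = s (t - dinfty) := by
        rw [hgdef]; simp only [extendInit]
        rw [if_neg (not_lt.2 h0)]
      have hnt : ∀ τ : ℝ, (-1:ℝ) < τ → τ ≤ t - dinfty → ¬ Transition g τ := by
        intro τ h1 h2 htr'
        obtain ⟨k, hk⟩ := hcomp τ htr'
        have hmem := hE2 k (τ, g τ) hk
        have h3 : t < τ + dinfty := hall _ hmem
        linarith
      have hcst : g (t - dinfty) = g (-1) :=
        const_of_noTransition g hrc (-1) (t - dinfty) (by linarith) hnt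
      have hgm1 : g (-1) = x := by
        rw [hgdef]; simp only [extendInit]
        rw [if_pos (show (-1:ℝ) < 0 by norm_num)]
      rw [← hst', hcst, hgm1]

noncomputable def sigOne (x : Bool) : ℝ → Bool := fun _ => !x

noncomputable def evOne (x : Bool) : ℕ → Option (ℝ × Bool) :=
  fun n => if n = 0 then some ((0:ℝ), !x) else none

noncomputable def outOne (dinfty : ℝ) (x : Bool) : ℝ → Bool :=
  fun t => if t < dinfty then x else !x

lemma extendInit_sigOne (x : Bool) :
    ∀ u : ℝ, extendInit x (sigOne x) u = if u < 0 then x else !x := fun _ => rfl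

lemma isSignal_sigOne (x : Bool) : IsSignal (sigOne x) := by
  constructor
  · exact fun t => ⟨1, one_pos, fun u _ _ => rfl⟩
  · intro a b
    apply Set.Finite.subset Set.finite_empty
    intro τ hτ
    obtain ⟨u, _, _, h3⟩ := hτ.2.2 1 one_pos
    exact absurd rfl h3

lemma enum_one (x : Bool) : EnumeratesEvents x (sigOne x) (evOne x) := by
  refine ⟨?_, ?_, ?_, ?_⟩
  · intro n _; simp [evOne]
  · intro n e e' h1 h2
    exfalso; simp [evOne] at h2
  · intro n t b h
    have hn : n = 0 := by
      by_contra h'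
      simp [evOne, h'] at h
    subst hn
    have h0 : evOne x 0 = some ((0:ℝ), !x) := rfl
    obtain ⟨ht, hb⟩ := Prod.ext_iff.1 (Option.some.inj ((h0.symm).trans h))
    simp only at ht hb
    subst ht; subst hb
    constructor
    · intro ε hε
      refine ⟨-ε/2, by linarith, by linarith, ?_⟩
      rw [extendInit_sigOne, extendInit_sigOne,
        if_pos (show -ε/2 < (0:ℝ) by linarith), if_neg (lt_irrefl (0:ℝ))]
      exact (Bool.not_ne_self x).symm
    · rw [extendInit_sigOne, if_neg (lt_irrefl (0:ℝ))]
  · intro τ htr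
    have hτ0 : (0:ℝ) ≤ τ := transition_nonneg x (sigOne x) τ htr
    have hτeq : τ = 0 := by
      by_contra hne
      have hτpos : 0 < τ := lt_of_le_of_ne hτ0 (Ne.symm hne)
      obtain ⟨u, h1, h2, h3⟩ := htr τ hτpos
      apply h3
      rw [extendInit_sigOne, extendInit_sigOne,
        if_neg (not_lt.2 (show (0:ℝ) ≤ u by linarith)), if_neg (not_lt.2 hτ0)]
    subst hτeq
    refine ⟨0, ?_⟩
    rw [extendInit_sigOne, if_neg (lt_irrefl (0:ℝ))]
    simp [evOne]

lemma states_one (δ : ℝ → ℝ) (dinfty : ℝ) (x : Bool) :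
    ∀ n : ℕ, 1 ≤ n → fstatesO δ dinfty x (evOne x) n = [((0:ℝ) + dinfty, !x)] := by
  intro n hn
  induction n with
  | zero => exact absurd hn (by norm_num)
  | succ n ih =>
      rcases Nat.eq_zero_or_pos n with h | h
      · subst h
        rw [fstatesO_succ_some δ dinfty x (evOne x) 0 ((0:ℝ), !x) (by simp [evOne]),
          fstatesO_zero, fstep_nil]
        rw [if_neg (Bool.not_ne_self x)]
      · rw [fstatesO_succ_none δ dinfty x (evOne x) n
          (by simp [evOne, Nat.pos_iff_ne_zero.1 h])]
        exact ih h

lemma limit_one (δ : ℝ → ℝ) (dinfty : ℝ) (x : Bool) :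
    limitEvents δ dinfty x (evOne x) = {((0:ℝ) + dinfty, !x)} := by
  ext f
  constructor
  · rintro ⟨N, hN⟩
    have h1 := hN (N+1) (Nat.le_succ N)
    rw [states_one δ dinfty x (N+1) (Nat.succ_le_succ (Nat.zero_le N))] at h1
    simpa using h1
  · rintro hf
    refine ⟨1, fun k hk => ?_⟩
    rw [states_one δ dinfty x k hk]
    simpa using hf

lemma so_one (δ : ℝ → ℝ) (dinfty : ℝ) (x : Bool) :
    SignalOfEvents x (limitEvents δ dinfty x (evOne x)) (outOne dinfty x) := by
  rw [limit_one]
  intro t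
  rcases lt_or_ge t dinfty with h | h
  · right
    constructor
    · rintro e he
      rw [Set.mem_singleton_iff] at he
      rw [he]
      show t < 0 + dinfty
      linarith
    · simp [outOne, h]
  · left
    refine ⟨((0:ℝ) + dinfty, !x), rfl, show (0:ℝ) + dinfty ≤ t by linarith, ?_, ?_⟩
    · simp [outOne, not_lt.2 h]
    · rintro e' he' _
      rw [Set.mem_singleton_iff] at he'
      rw [he']

noncomputable def sigPulse (b : ℝ) (x : Bool) : ℝ → Bool := fun t => if t < b then !x else x

noncomputable def evPulse (b : ℝ) (x : Bool) : ℕ → Option (ℝ × Bool) :=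
  fun n => if n = 0 then some ((0:ℝ), !x) else if n = 1 then some (b, x) else none

noncomputable def outPulse (dinfty c : ℝ) (x : Bool) : ℝ → Bool :=
  fun t => if t < dinfty then x else if t < c then !x else x

lemma extendInit_sigPulse (b : ℝ) (x : Bool) :
    ∀ u : ℝ, extendInit x (sigPulse b x) u =
      if u < 0 then x else if u < b then !x else x := fun _ => rfl

lemma isSignal_sigPulse (b : ℝ) (x : Bool) (hb : 0 < b) : IsSignal (sigPulse b x) := by
  constructor
  · intro t
    rcases lt_or_ge t b with h | h
    · exact ⟨b - t, by linarith, fun u h1 h2 => by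
        simp only [sigPulse]; rw [if_pos (show u < b by linarith), if_pos h]⟩
    · exact ⟨1, one_pos, fun u h1 h2 => by
        simp only [sigPulse]; rw [if_neg (not_lt.2 (le_trans h h1)), if_neg (not_lt.2 h)]⟩
  · intro a' b'
    apply Set.Finite.subset (Set.finite_singleton b)
    intro τ hτ
    obtain ⟨-, -, hP⟩ := hτ
    by_contra hne
    rw [Set.mem_singleton_iff] at hne
    rcases lt_trichotomy τ b with h | h | h
    · obtain ⟨u, h1, h2, h3⟩ := hP 1 one_pos
      apply h3
      simp only [sigPulse]; rw [if_pos (lt_trans h2 h), if_pos h]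
    · exact hne h
    · obtain ⟨u, h1, h2, h3⟩ := hP (τ - b) (by linarith)
      apply h3
      simp only [sigPulse]
      rw [if_neg (not_lt.2 (show b ≤ u by linarith)), if_neg (not_lt.2 (le_of_lt h))]

lemma enum_pulse (b : ℝ) (x : Bool) (hb : 0 < b) :
    EnumeratesEvents x (sigPulse b x) (evPulse b x) := by
  refine ⟨?_, ?_, ?_, ?_⟩
  · intro n h
    have hn0 : n ≠ 0 := by rintro rfl; simp [evPulse] at h
    have hn1 : n ≠ 1 := by rintro rfl; simp [evPulse] at h
    simp only [evPulse]
    rw [if_neg (Nat.succ_ne_zero n), if_neg (show ¬ n + 1 = 1 by omega)]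
  · intro n e e' h1 h2
    have hn0 : n = 0 := by
      by_contra h'
      rcases (show n = 1 ∨ 2 ≤ n by omega) with h'' | h''
      · subst h''
        have : evPulse b x 2 = none := rfl
        rw [this] at h2; exact absurd h2 (by simp)
      · have : evPulse b x n = none := by
          simp only [evPulse]
          rw [if_neg (show ¬ n = 0 by omega), if_neg (show ¬ n = 1 by omega)]
        rw [this] at h1; exact absurd h1 (by simp)
    subst hn0
    have he : e = ((0:ℝ), !x) := Option.some.inj (h1.symm.trans (rfl : evPulse b x 0 = some ((0:ℝ), !x)))
    have he' : e' = (b, x) := Option.some.inj (h2.symm.trans (rfl : evPulse b x 1 = some (b, x)))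
    rw [he, he']
    show (0:ℝ) < b
    exact hb
  · intro n t c h
    have hn : n = 0 ∨ n = 1 := by
      by_contra h'
      push_neg at h'
      have : evPulse b x n = none := by
        simp only [evPulse]
        rw [if_neg h'.1, if_neg h'.2]
      rw [this] at h; exact absurd h (by simp)
    rcases hn with rfl | rfl
    · obtain ⟨ht, hc⟩ := Prod.ext_iff.1
        (Option.some.inj ((rfl : evPulse b x 0 = some ((0:ℝ), !x)).symm.trans h))
      simp only at ht hc
      subst ht; subst hc
      constructor
      · intro ε hε
        refine ⟨-ε/2, by linarith, by linarith, ?_⟩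
        rw [extendInit_sigPulse, extendInit_sigPulse,
          if_pos (show -ε/2 < (0:ℝ) by linarith), if_neg (lt_irrefl (0:ℝ)), if_pos hb]
        exact (Bool.not_ne_self x).symm
      · rw [extendInit_sigPulse, if_neg (lt_irrefl (0:ℝ)), if_pos hb]
    · obtain ⟨ht, hc⟩ := Prod.ext_iff.1
        (Option.some.inj ((rfl : evPulse b x 1 = some (b, x)).symm.trans h))
      simp only at ht hc
      subst ht; subst hc
      constructor
      · intro ε hε
        have hm : max 0 (b - ε) < b := max_lt hb (by linarith)
        have h0 : (0:ℝ) ≤ max 0 (b - ε) := le_max_left 0 (b - ε)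
        have hbe : b - ε ≤ max 0 (b - ε) := le_max_right 0 (b - ε)
        refine ⟨(max 0 (b - ε) + b)/2, by linarith, by linarith, ?_⟩
        rw [extendInit_sigPulse, extendInit_sigPulse,
          if_neg (not_lt.2 (show (0:ℝ) ≤ (max 0 (b - ε) + b)/2 by linarith)),
          if_pos (show (max 0 (b - ε) + b)/2 < b by linarith),
          if_neg (not_lt.2 (le_of_lt hb)), if_neg (lt_irrefl b)]
        exact Bool.not_ne_self x
      · rw [extendInit_sigPulse, if_neg (not_lt.2 (le_of_lt hb)), if_neg (lt_irrefl b)]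
  · intro τ htr
    have hτ0 : (0:ℝ) ≤ τ := transition_nonneg x (sigPulse b x) τ htr
    have hτor : τ = 0 ∨ τ = b := by
      by_contra hne
      push_neg at hne
      rcases lt_trichotomy τ b with h | h | h
      · have hτpos : (0:ℝ) < τ := lt_of_le_of_ne hτ0 (Ne.symm hne.1)
        obtain ⟨u, h1, h2, h3⟩ := htr τ hτpos
        apply h3
        rw [extendInit_sigPulse, extendInit_sigPulse,
          if_neg (not_lt.2 (show (0:ℝ) ≤ u by linarith)), if_pos (lt_trans h2 h),
          if_neg (not_lt.2 hτ0), if_pos h]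
      · exact hne.2 h
      · obtain ⟨u, h1, h2, h3⟩ := htr (τ - b) (by linarith)
        apply h3
        rw [extendInit_sigPulse, extendInit_sigPulse,
          if_neg (not_lt.2 (show (0:ℝ) ≤ u by linarith)),
          if_neg (not_lt.2 (show b ≤ u by linarith)),
          if_neg (not_lt.2 hτ0), if_neg (not_lt.2 (le_of_lt h))]
    rcases hτor with rfl | hτb
    · refine ⟨0, ?_⟩
      have hval : extendInit x (sigPulse b x) 0 = !x := by
        rw [extendInit_sigPulse, if_neg (lt_irrefl (0:ℝ)), if_pos hb]
      rw [hval]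
      rfl
    · refine ⟨1, ?_⟩
      rw [hτb]
      have hval : extendInit x (sigPulse b x) b = x := by
        rw [extendInit_sigPulse, if_neg (not_lt.2 (le_of_lt hb)), if_neg (lt_irrefl b)]
      rw [hval]
      rfl

lemma states_pulse1 (δ : ℝ → ℝ) (dinfty b : ℝ) (x : Bool) :
    fstatesO δ dinfty x (evPulse b x) 1 = [((0:ℝ) + dinfty, !x)] := by
  rw [fstatesO_succ_some δ dinfty x (evPulse b x) 0 ((0:ℝ), !x) rfl, fstatesO_zero,
    fstep_nil, if_neg (Bool.not_ne_self x)]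

lemma states_pulse2 (δ : ℝ → ℝ) (dinfty b : ℝ) (x : Bool) :
    fstatesO δ dinfty x (evPulse b x) 2 =
      if (0:ℝ) + dinfty < b + δ (b - ((0:ℝ) + dinfty)) then
        [(b + δ (b - ((0:ℝ) + dinfty)), x), ((0:ℝ) + dinfty, !x)]
      else [] := by
  rw [fstatesO_succ_some δ dinfty x (evPulse b x) 1 (b, x) rfl, states_pulse1, fstep_cons,
    if_neg (Bool.not_ne_self x).symm]

lemma states_pulse_ge2 (δ : ℝ → ℝ) (dinfty b : ℝ) (x : Bool) :
    ∀ n : ℕ, 2 ≤ n →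
      fstatesO δ dinfty x (evPulse b x) n = fstatesO δ dinfty x (evPulse b x) 2 := by
  intro n hn
  induction n with
  | zero => omega
  | succ n ih =>
      rcases Nat.lt_or_ge n 2 with h | h
      · have hn1 : n = 1 := by omega
        subst hn1; rfl
      · rw [fstatesO_succ_none δ dinfty x (evPulse b x) n
          (by simp only [evPulse]
              rw [if_neg (show ¬ n = 0 by omega), if_neg (show ¬ n = 1 by omega)])]
        exact ih h

lemma limit_pulse (δ : ℝ → ℝ) (dinfty b : ℝ) (x : Bool) :
    limitEvents δ dinfty x (evPulse b x) =
      {f | f ∈ fstatesO δ dinfty x (evPulse b x) 2} := by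
  ext f
  constructor
  · rintro ⟨N, hN⟩
    have h1 := hN (N+2) (by omega)
    rwa [states_pulse_ge2 δ dinfty b x (N+2) (by omega)] at h1
  · intro hf
    exact ⟨2, fun k hk => by rw [states_pulse_ge2 δ dinfty b x k hk]; exact hf⟩

/-- a forgetful single-history channel with delay function `δ` and initial
value `x` is a constant-delay channel if and only if `δ` is constant on the open
interval `(−δ∞, ∞)`. -/
theorem forgetful_constant_delay_iff (δ : ℝ → ℝ) (dinfty : ℝ) (x : Bool)
    (hmono : Monotone δ)
    (hlim : Filter.Tendsto δ Filter.atTop (nhds dinfty))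
    (hpos : 0 < dinfty) :
    (∃ d : ℝ, 0 < d ∧ ∀ s out : ℝ → Bool, IsSignal s →
        ForgetfulChannel δ dinfty x s out → out = delayChannel d x s) ↔
      (∀ u v : ℝ, -dinfty < u → -dinfty < v → δ u = δ v) := by
  constructor
  · rintro ⟨d, hd, hchan⟩
    have heq1 := hchan (sigOne x) (outOne dinfty x) (isSignal_sigOne x)
      ⟨evOne x, enum_one x, so_one δ dinfty x⟩
    have hd1 : dinfty ≤ d := by
      by_contra hlt
      push_neg at hlt
      have h1 := congrFun heq1 d
      simp only [outOne, delayChannel, sigOne] at h1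
      rw [if_pos hlt, if_neg (lt_irrefl d)] at h1
      exact Bool.not_ne_self x h1.symm
    have hd2 : d ≤ dinfty := by
      by_contra hlt
      push_neg at hlt
      have h1 := congrFun heq1 dinfty
      simp only [outOne, delayChannel, sigOne] at h1
      rw [if_neg (lt_irrefl dinfty), if_pos hlt] at h1
      exact Bool.not_ne_self x h1
    have hdd : d = dinfty := le_antisymm hd2 hd1
    rw [hdd] at hchan
    suffices hkey : ∀ w : ℝ, -dinfty < w → δ w = dinfty by
      intro u v hu hv; rw [hkey u hu, hkey v hv]
    intro w hw
    have hle : δ w ≤ dinfty := ge_of_tendsto hlim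
      (Filter.eventually_atTop.2 ⟨w, fun T hT => hmono hT⟩)
    by_contra hne
    have hlt : δ w < dinfty := lt_of_le_of_ne hle hne
    set b := dinfty + w with hbdef
    have hb0 : (0:ℝ) < b := by rw [hbdef]; linarith
    have harg : b - ((0:ℝ) + dinfty) = w := by rw [hbdef]; ring
    by_cases hcond : (0:ℝ) + dinfty < b + δ (b - ((0:ℝ) + dinfty))
    · -- append case
      have hEA : limitEvents δ dinfty x (evPulse b x) =
          {f | f ∈ [(b + δ (b - ((0:ℝ) + dinfty)), x), ((0:ℝ) + dinfty, !x)]} := by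
        rw [limit_pulse, states_pulse2, if_pos hcond]
      rw [harg] at hcond hEA
      have hcd : dinfty < b + δ w := by linarith
      have hso : SignalOfEvents x (limitEvents δ dinfty x (evPulse b x))
          (outPulse dinfty (b + δ w) x) := by
        rw [hEA]
        intro t
        rcases lt_or_ge t dinfty with h | h
        · right
          refine ⟨?_, by simp [outPulse, h]⟩
          intro e he
          simp only [Set.mem_setOf_eq, List.mem_cons, List.not_mem_nil, or_false] at he
          rcases he with rfl | rfl
          · show t < b + δ w; linarith
          · show t < (0:ℝ) + dinfty; linarith
        · rcases lt_or_ge t (b + δ w) with h2 | h2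
          · left
            refine ⟨((0:ℝ) + dinfty, !x), by simp, show (0:ℝ) + dinfty ≤ t by linarith, ?_, ?_⟩
            · simp only [outPulse]
              rw [if_neg (not_lt.2 h), if_pos h2]
            · intro e' he' hle'
              simp only [Set.mem_setOf_eq, List.mem_cons, List.not_mem_nil, or_false] at he'
              rcases he' with rfl | rfl
              · exfalso
                have h4 : b + δ w ≤ t := hle'
                linarith
              · exact le_refl _
          · left
            refine ⟨(b + δ w, x), by simp, show b + δ w ≤ t from h2, ?_, ?_⟩
            · simp only [outPulse]
              rw [if_neg (not_lt.2 h), if_neg (not_lt.2 h2)]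
            · intro e' he' hle'
              simp only [Set.mem_setOf_eq, List.mem_cons, List.not_mem_nil, or_false] at he'
              rcases he' with rfl | rfl
              · exact le_refl _
              · show (0:ℝ) + dinfty ≤ b + δ w; linarith
      have heq2 := hchan (sigPulse b x) (outPulse dinfty (b + δ w) x)
        (isSignal_sigPulse b x hb0) ⟨evPulse b x, enum_pulse b x hb0, hso⟩
      have h1 := congrFun heq2 (b + δ w)
      simp only [outPulse, delayChannel, sigPulse] at h1
      have hcb : b + δ w - dinfty < b := by linarith
      rw [if_neg (not_lt.2 (le_of_lt hcd)), if_neg (lt_irrefl (b + δ w)), if_pos hcb,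
        if_neg (not_lt.2 (le_of_lt hcd))] at h1
      exact Bool.not_ne_self x h1.symm
    · -- removal case
      have hEB : limitEvents δ dinfty x (evPulse b x) = ∅ := by
        rw [limit_pulse, states_pulse2, if_neg hcond]
        ext f; simp
      have hso : SignalOfEvents x (limitEvents δ dinfty x (evPulse b x)) (fun _ => x) := by
        rw [hEB]
        intro t
        right
        exact ⟨fun e he => absurd he (Set.notMem_empty e), rfl⟩
      have heq2 := hchan (sigPulse b x) (fun _ => x) (isSignal_sigPulse b x hb0)
        ⟨evPulse b x, enum_pulse b x hb0, hso⟩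
      have h1 := congrFun heq2 dinfty
      simp only [delayChannel, sigPulse] at h1
      rw [if_neg (lt_irrefl dinfty),
        if_pos (show dinfty - dinfty < b by rw [hbdef]; linarith)] at h1
      exact Bool.not_ne_self x h1.symm
  · intro hc
    have hconst : ∀ u : ℝ, -dinfty < u → δ u = dinfty := by
      intro u hu
      have hev : δ =ᶠ[Filter.atTop] (fun _ : ℝ => δ u) := by
        filter_upwards [Filter.eventually_ge_atTop (max u 0)] with T hT
        have h0 : (0:ℝ) ≤ max u 0 := le_max_right u 0
        exact hc T u (by linarith) hu
      have h2 : Filter.Tendsto (fun _ : ℝ => δ u) Filter.atTop (nhds dinfty) :=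
        Filter.Tendsto.congr' hev hlim
      exact tendsto_nhds_unique tendsto_const_nhds h2
    exact ⟨dinfty, hpos, fun s out hs hch => backward_lemma δ dinfty x hconst s out hs hch⟩
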